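/- Every uniquely orderable interval graph contains no buried subgraph. That is, if (V,E) is an interval graph with a buried subgraph B, then there exist two partial orders associated to (V,E) that are neither equal nor dual to each other. -/

import Mathlib

open Set

variable {V : Type*}

/-- An interval representation of a graph `E` over a linear order `L`. -/
def IsIntervalRep {V : Type*} {L : Type} [LinearOrder L] (E : V → V → Prop)
    (fL fR : V → L) : Prop :=
  (∀ v, fL v ≤ fR v) ∧ ∀ u v, E u v ↔ (fL u ≤ fR v ∧ fL v ≤ fR u)

/-- `E` is a (reflexive, symmetric) interval graph. -/
def IsIntervalGraph {V : Type*} (E : V → V → Prop) : Prop :=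
  (∀ v, E v v) ∧ (∀ u v, E u v → E v u) ∧
    ∃ (L : Type) (_ : LinearOrder L) (fL fR : V → L), IsIntervalRep E fL fR

/-- `p 0, …, p n` is a path in `E`. -/
def IsPath {V : Type*} (E : V → V → Prop) (p : ℕ → V) (n : ℕ) : Prop :=
  ∀ i < n, E (p i) (p (i + 1))

/-- A minimal path: no chords. -/
def IsMinimalPath {V : Type*} (E : V → V → Prop) (p : ℕ → V) (n : ℕ) : Prop :=
  IsPath E p n ∧ ∀ i j, i + 1 < j → j ≤ n → ¬ E (p i) (p j)

/-- Two vertices are connected by a path. -/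
def Reach {V : Type*} (E : V → V → Prop) (u v : V) : Prop :=
  ∃ (n : ℕ) (p : ℕ → V), IsPath E p n ∧ p 0 = u ∧ p n = v

def Connected {V : Type*} (E : V → V → Prop) : Prop := ∀ u v, Reach E u v

/-- `r` is a strict partial order associated to the graph `E` (i.e. `E` is the
incomparability graph of `r`). -/
def IsAssociated {V : Type*} (E r : V → V → Prop) : Prop :=
  (∀ v, ¬ r v v) ∧ (∀ a b c, r a b → r b c → r a c) ∧
    ∀ u v, ¬ E u v ↔ (r u v ∨ r v u)

/-- `E` is uniquely orderable: it has an associated partial order, unique up to duality. -/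
def UniquelyOrderable {V : Type*} (E : V → V → Prop) : Prop :=
  ∃ r, IsAssociated E r ∧ ∀ r', IsAssociated E r' → r' = r ∨ r' = flip r

def Kset {V : Type*} (E : V → V → Prop) (B : Set V) : Set V := {v | ∀ b ∈ B, E v b}

def Rset {V : Type*} (E : V → V → Prop) (B : Set V) : Set V :=
  {v | v ∉ B ∧ v ∉ Kset E B}

/-- `B` is a buried subgraph of `E`. -/
def Buried {V : Type*} (E : V → V → Prop) (B : Set V) : Prop :=
  (∃ a ∈ B, ∃ b ∈ B, ¬ E a b) ∧ (∀ b ∈ B, b ∉ Kset E B) ∧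
    (Rset E B).Nonempty ∧ ∀ b ∈ B, ∀ r ∈ Rset E B, ¬ E b r

/-- The set `W` of non-adjacent ordered pairs. -/
def Wset {V : Type*} (E : V → V → Prop) : Set (V × V) := {p | ¬ E p.1 p.2}

/-- The relation `Q` on pairs. -/
def Qrel {V : Type*} (E : V → V → Prop) (p q : V × V) : Prop :=
  E p.1 q.1 ∧ E p.2 q.2

/-- `p` and `q` are connected by a `Q`-path inside `W`. -/
def QReach {V : Type*} (E : V → V → Prop) (p q : V × V) : Prop :=
  ∃ (n : ℕ) (c : ℕ → V × V), c 0 = p ∧ c n = q ∧ (∀ i ≤ n, c i ∈ Wset E) ∧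
    ∀ i < n, Qrel E (c i) (c (i + 1))

/-- The sets `B_n(v,u)` of the standard construction. -/
def Bfam {V : Type*} (E : V → V → Prop) (v u : V) : ℕ → Set V
  | 0 => {v, u}
  | n + 1 => {w | ∃ z ∈ Bfam E v u n, ∃ z' ∈ Bfam E v u n, E z w ∧ ¬ E z' w}

/-- `B(v,u) = ⋃ n, B_n(v,u)`. -/
def Bset {V : Type*} (E : V → V → Prop) (v u : V) : Set V := ⋃ n, Bfam E v u n

/-- The least `n` with `w ∈ B_n(v,u)`. -/
noncomputable def eLevel {V : Type*} (E : V → V → Prop) (v u w : V) : ℕ :=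
  sInf {n | w ∈ Bfam E v u n}


/-!
Take an interval representation `(fL, fR)` and non-adjacent `a, b ∈ B` with `fR a < fL b`, and put
`t = fR a`. Every vertex outside `B` is adjacent to all of `B` (it lies in `K(B)`, and its interval
contains `t`) or to none of it (it lies in `R(B)`, and its interval misses `t`). Hence all of `B`
can be shrunk into an infinitesimal neighbourhood of `t` and represented there either as before or
mirrored. The two resulting interval orders disagree on `{a, b}`, but agree on `{a, c}` for any
`c ∈ R(B)`, so they are neither equal nor dual.
-/

section IntervalRep

variable {L : Type} [LinearOrder L] {E : V → V → Prop} {fL fR : V → L}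

theorem IsIntervalRep.symm (h : IsIntervalRep E fL fR) {u v : V} (huv : E u v) : E v u :=
  (h.2 v u).2 ((h.2 u v).1 huv).symm

theorem IsIntervalRep.dual (h : IsIntervalRep E fL fR) :
    IsIntervalRep E (OrderDual.toDual ∘ fR) (OrderDual.toDual ∘ fL) :=
  ⟨h.1, fun u v => (h.2 u v).trans and_comm⟩

theorem IsIntervalRep.isAssociated (h : IsIntervalRep E fL fR) :
    IsAssociated E (fun u v => fR u < fL v) := by
  refine ⟨fun v hv => (h.1 v).not_gt hv, fun a b c hab hbc => (hab.trans_le (h.1 b)).trans hbc,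
    fun u v => ?_⟩
  rw [h.2 u v, not_and_or, not_le, not_le, or_comm]

end IntervalRep

theorem IsAssociated.asymm {E r : V → V → Prop} (h : IsAssociated E r) {u v : V} (huv : r u v) :
    ¬ r v u :=
  fun hvu => h.1 u (h.2.1 u v u huv hvu)

section Squeeze

variable {L M : Type} [LinearOrder L] [LinearOrder M]

open Classical in
/-- With `e = ⊥` for left and `e = ⊤` for right endpoints, this shrinks the intervals of `B` into an
infinitesimal neighbourhood of `t`, where they are placed according to `g`. -/
noncomputable def squeezeEnd (B : Set V) (t : L) (f : V → L) (g : V → M)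
    (e : WithBot (WithTop M)) (v : V) : L ×ₗ WithBot (WithTop M) :=
  if v ∈ B then toLex (t, ((g v : WithTop M) : WithBot (WithTop M))) else toLex (f v, e)

variable {B : Set V} {t : L} {f f' : V → L} {g g' : V → M} {e e' : WithBot (WithTop M)} {u v : V}

theorem squeezeEnd_le_squeezeEnd_of_mem_of_mem (hu : u ∈ B) (hv : v ∈ B) :
    squeezeEnd B t f g e u ≤ squeezeEnd B t f' g' e' v ↔ g u ≤ g' v := by
  simp [squeezeEnd, hu, hv, Prod.Lex.toLex_le_toLex']

theorem squeezeEnd_le_squeezeEnd_top_of_mem_of_notMem (hu : u ∈ B) (hv : v ∉ B) :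
    squeezeEnd B t f g e u ≤ squeezeEnd B t f' g' ⊤ v ↔ t ≤ f' v := by
  simp [squeezeEnd, hu, hv, Prod.Lex.toLex_le_toLex']

theorem squeezeEnd_bot_le_squeezeEnd_of_notMem_of_mem (hu : u ∉ B) (hv : v ∈ B) :
    squeezeEnd B t f g ⊥ u ≤ squeezeEnd B t f' g' e' v ↔ f u ≤ t := by
  simp [squeezeEnd, hu, hv, Prod.Lex.toLex_le_toLex']

theorem squeezeEnd_bot_le_squeezeEnd_top_of_notMem_of_notMem (hu : u ∉ B) (hv : v ∉ B) :
    squeezeEnd B t f g ⊥ u ≤ squeezeEnd B t f' g' ⊤ v ↔ f u ≤ f' v := by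
  simp [squeezeEnd, hu, hv, Prod.Lex.toLex_le_toLex']

theorem squeezeEnd_lt_squeezeEnd_of_mem_of_mem (hu : u ∈ B) (hv : v ∈ B) :
    squeezeEnd B t f g e u < squeezeEnd B t f' g' e' v ↔ g u < g' v := by
  simp [squeezeEnd, hu, hv, Prod.Lex.toLex_lt_toLex']

theorem squeezeEnd_lt_squeezeEnd_bot_of_mem_of_notMem (hu : u ∈ B) (hv : v ∉ B) :
    squeezeEnd B t f g e u < squeezeEnd B t f' g' ⊥ v ↔ t < f' v := by
  simp [squeezeEnd, hu, hv, Prod.Lex.toLex_lt_toLex]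

theorem squeezeEnd_top_lt_squeezeEnd_of_notMem_of_mem (hu : u ∉ B) (hv : v ∈ B) :
    squeezeEnd B t f g ⊤ u < squeezeEnd B t f' g' e' v ↔ f u < t := by
  simp [squeezeEnd, hu, hv, Prod.Lex.toLex_lt_toLex]

theorem IsIntervalRep.squeezeEnd {E : V → V → Prop} {fL fR : V → L} (h : IsIntervalRep E fL fR)
    (ht : ∀ u ∈ B, ∀ v ∉ B, E u v ↔ fL v ≤ t ∧ t ≤ fR v) {p q : V → M}
    (hpq : ∀ v ∈ B, p v ≤ q v) (hEpq : ∀ u ∈ B, ∀ v ∈ B, E u v ↔ p u ≤ q v ∧ p v ≤ q u) :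
    IsIntervalRep E (squeezeEnd B t fL p ⊥) (squeezeEnd B t fR q ⊤) := by
  refine ⟨fun v => ?_, fun u v => ?_⟩
  · by_cases hv : v ∈ B
    · exact (squeezeEnd_le_squeezeEnd_of_mem_of_mem hv hv).2 (hpq v hv)
    · exact (squeezeEnd_bot_le_squeezeEnd_top_of_notMem_of_notMem hv hv).2 (h.1 v)
  by_cases hu : u ∈ B <;> by_cases hv : v ∈ B
  · rw [hEpq u hu v hv, squeezeEnd_le_squeezeEnd_of_mem_of_mem hu hv,
      squeezeEnd_le_squeezeEnd_of_mem_of_mem hv hu]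
  · rw [ht u hu v hv, squeezeEnd_le_squeezeEnd_top_of_mem_of_notMem hu hv,
      squeezeEnd_bot_le_squeezeEnd_of_notMem_of_mem hv hu, and_comm]
  · rw [show E u v ↔ E v u from ⟨h.symm, h.symm⟩, ht v hv u hu,
      squeezeEnd_bot_le_squeezeEnd_of_notMem_of_mem hu hv,
      squeezeEnd_le_squeezeEnd_top_of_mem_of_notMem hv hu]
  · rw [h.2 u v, squeezeEnd_bot_le_squeezeEnd_top_of_notMem_of_notMem hu hv,
      squeezeEnd_bot_le_squeezeEnd_top_of_notMem_of_notMem hv hu]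

end Squeeze

section Buried

variable {L : Type} [LinearOrder L] {E : V → V → Prop} {fL fR : V → L} {B : Set V}

theorem Buried.exists_lt_of_isIntervalRep (hB : Buried E B) (h : IsIntervalRep E fL fR) :
    ∃ a ∈ B, ∃ b ∈ B, fR a < fL b := by
  obtain ⟨a, ha, b, hb, hab⟩ := hB.1
  rw [h.2 a b, not_and_or, not_le, not_le] at hab
  exact hab.elim (fun hba => ⟨b, hb, a, ha, hba⟩) (fun hab => ⟨a, ha, b, hb, hab⟩)

theorem Buried.adj_iff_of_isIntervalRep (hB : Buried E B) (h : IsIntervalRep E fL fR) {a b : V}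
    (ha : a ∈ B) (hb : b ∈ B) (hab : fR a < fL b) :
    ∀ u ∈ B, ∀ v ∉ B, E u v ↔ fL v ≤ fR a ∧ fR a ≤ fR v := by
  intro u hu v hv
  by_cases hK : v ∈ Kset E B
  · have hva := (h.2 v a).1 (hK a ha)
    have hvb := (h.2 v b).1 (hK b hb)
    exact iff_of_true (h.symm (hK u hu)) ⟨hva.1, hab.le.trans hvb.2⟩
  · have hR : v ∈ Rset E B := ⟨hv, hK⟩
    refine iff_of_false (hB.2.2.2 u hu v hR) fun ⟨hvt, htv⟩ => hB.2.2.2 a ha v hR ?_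
    exact (h.2 a v).2 ⟨(h.1 a).trans htv, hvt⟩

end Buried

theorem IsAssociated.ne_of_rel_of_rel {E r₁ r₂ : V → V → Prop} (h₂ : IsAssociated E r₂)
    {x y : V} (hr₁ : r₁ x y) (hr₂ : r₂ y x) : r₁ ≠ r₂ :=
  fun h => h₂.asymm hr₂ ((congrFun₂ h x y).mp hr₁)

theorem IsAssociated.ne_flip_of_rel_of_rel {E r₁ r₂ : V → V → Prop} (h₂ : IsAssociated E r₂)
    {x y : V} (hr₁ : r₁ x y) (hr₂ : r₂ x y) : r₁ ≠ flip r₂ :=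
  fun h => h₂.asymm hr₂ ((congrFun₂ h x y).mp hr₁)

theorem stmt8 {V : Type*} (E : V → V → Prop) (hIG : IsIntervalGraph E)
    (B : Set V) (hB : Buried E B) :
    ∃ r₁ r₂ : V → V → Prop, IsAssociated E r₁ ∧ IsAssociated E r₂ ∧
      r₁ ≠ r₂ ∧ r₁ ≠ flip r₂ := by
  obtain ⟨-, -, L, _, fL, fR, h⟩ := hIG
  obtain ⟨a, ha, b, hb, hab⟩ := hB.exists_lt_of_isIntervalRep h
  obtain ⟨c, hcB, hcK⟩ := hB.2.2.1
  have ht := hB.adj_iff_of_isIntervalRep h ha hb hab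
  have h₁ := (h.squeezeEnd ht (fun v _ => h.1 v) fun u _ v _ => h.2 u v).isAssociated
  have h₂ := (h.squeezeEnd ht (fun v _ => h.dual.1 v) fun u _ v _ => h.dual.2 u v).isAssociated
  refine ⟨_, _, h₁, h₂, h₂.ne_of_rel_of_rel (x := a) (y := b) ?_ ?_, ?_⟩
  · exact (squeezeEnd_lt_squeezeEnd_of_mem_of_mem ha hb).mpr hab
  · exact (squeezeEnd_lt_squeezeEnd_of_mem_of_mem hb ha).mpr hab
  have hac : ¬ (fL c ≤ fR a ∧ fR a ≤ fR c) := (ht a ha c hcB).not.mp (hB.2.2.2 a ha c ⟨hcB, hcK⟩)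
  rcases not_and_or.mp hac with hc | hc
  · refine h₂.ne_flip_of_rel_of_rel (x := a) (y := c) ?_ ?_ <;>
      exact (squeezeEnd_lt_squeezeEnd_bot_of_mem_of_notMem ha hcB).mpr (not_le.mp hc)
  · refine h₂.ne_flip_of_rel_of_rel (x := c) (y := a) ?_ ?_ <;>
      exact (squeezeEnd_top_lt_squeezeEnd_of_notMem_of_mem hcB ha).mpr (not_le.mp hc)
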